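/- The function N₂(x,y; x',y') = −(1/4π) log[(cosh(π(x−x')) − cos(π(y−y')))(cosh(π(x−x')) − cos(π(y+y')))] satisfies ∂N₂/∂y = 0 at y = 0 and y = 1 whenever (x,y) ≠ (x',y') and (x,y) ≠ (x',−y'), i.e. its normal derivative vanishes on both walls of the strip 0 ≤ y ≤ 1. -/

import Mathlib

/-!
The image charge at `(x', -y')` makes `y ↦ N(x, y; x', y')` invariant under the reflection
`y ↦ 2n - y` for every integer `n`: the reflection swaps the two factors of the product, because
`cos` is even and `2π`-periodic. Both walls `y = 0` and `y = 1` are centres of such reflections, and a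
function invariant under reflection in a point has zero derivative there.
-/

open Real

theorem deriv_eq_zero_of_symmetric_about {𝕜 F : Type*} [NontriviallyNormedField 𝕜] [CharZero 𝕜]
    [NormedAddCommGroup F] [NormedSpace 𝕜 F] {f : 𝕜 → F} {a : 𝕜}
    (h : ∀ t, f (2 * a - t) = f t) : deriv f a = 0 := by
  have hneg : deriv f a = -deriv f a := by
    have := deriv_comp_const_sub (f := f) (a := 2 * a) (x := a)
    rwa [funext h, two_mul, add_sub_cancel_right] at this
  have htwo : (2 : 𝕜) • deriv f a = 0 := by
    rw [two_smul]
    nth_rewrite 2 [hneg]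
    exact add_neg_cancel _
  exact (smul_eq_zero.mp htwo).resolve_left two_ne_zero

theorem image_product_two_mul_int_sub (c y' y : ℝ) (n : ℤ) :
    (c - cos (π * ((2 * n - y) - y'))) * (c - cos (π * ((2 * n - y) + y')))
      = (c - cos (π * (y - y'))) * (c - cos (π * (y + y'))) := by
  have h₁ : π * ((2 * n - y) - y') = -(π * (y + y')) + n * (2 * π) := by ring
  have h₂ : π * ((2 * n - y) + y') = -(π * (y - y')) + n * (2 * π) := by ring
  rw [h₁, h₂, cos_add_int_mul_two_pi, cos_add_int_mul_two_pi, cos_neg, cos_neg, mul_comm]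

theorem channel_neumann_function_walls_general (N : ℝ → ℝ → ℝ → ℝ → ℝ)
    (hN : ∀ x y x' y', N x y x' y'
      = -(1 / (4 * π)) * Real.log
          ((Real.cosh (π * (x - x')) - Real.cos (π * (y - y')))
            * (Real.cosh (π * (x - x')) - Real.cos (π * (y + y')))))
    (x x' y' : ℝ) :
    (((x, (0 : ℝ)) ≠ (x', y') ∧ (x, (0 : ℝ)) ≠ (x', -y')) →
      deriv (fun y => N x y x' y') 0 = 0)
    ∧ (((x, (1 : ℝ)) ≠ (x', y') ∧ (x, (1 : ℝ)) ≠ (x', -y')) →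
      deriv (fun y => N x y x' y') 1 = 0) := by
  have hreflect (n : ℤ) (t : ℝ) : N x (2 * n - t) x' y' = N x t x' y' := by
    rw [hN, hN, image_product_two_mul_int_sub]
  exact ⟨fun _ => deriv_eq_zero_of_symmetric_about (by simpa using hreflect 0),
    fun _ => deriv_eq_zero_of_symmetric_about (by simpa using hreflect 1)⟩

/-- The Neumann function of the channel `0 ≤ y ≤ 1` built by images,
`N₂ = −(1/4π) log[(cosh π(x−x') − cos π(y−y'))(cosh π(x−x') − cos π(y+y'))]`,
has vanishing normal derivative on both walls `y = 0` and `y = 1`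
away from the singular points. -/
theorem channel_neumann_function_walls (N : ℝ → ℝ → ℝ → ℝ → ℝ)
    (hN : ∀ x y x' y', N x y x' y'
      = -(1 / (4 * π)) * Real.log
          ((Real.cosh (π * (x - x')) - Real.cos (π * (y - y')))
            * (Real.cosh (π * (x - x')) - Real.cos (π * (y + y')))))
    (x x' y' : ℝ) (hy' : y' ∈ Set.Ioo (0 : ℝ) 1) :
    (((x, (0 : ℝ)) ≠ (x', y') ∧ (x, (0 : ℝ)) ≠ (x', -y')) →
      deriv (fun y => N x y x' y') 0 = 0)
    ∧ (((x, (1 : ℝ)) ≠ (x', y') ∧ (x, (1 : ℝ)) ≠ (x', -y')) →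
      deriv (fun y => N x y x' y') 1 = 0) :=
  channel_neumann_function_walls_general N hN x x' y'
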